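/- arXiv:1610.02175 — 2 statements merged into one kernel-verified Lean document; each statement's English description precedes it below -/
import Mathlib

section
/- Let G be a finite simple graph and T₂(G) its edge-semitotal graph (insert a vertex into each edge and join two new vertices whenever the corresponding edges of G are adjacent). Then F(T₂(G)) = F(G) + ξ₄(G) + 3·ReZG₃(G). -/
open SimpleGraph Finset
open scoped Classical

noncomputable section
namespace Paper

variable {V : Type*} [Fintype V]

/-- Degree as an integer. -/
def d (G : SimpleGraph V) (v : V) : ℤ := G.degree v

/-- Number of edges. -/
def m (G : SimpleGraph V) : ℤ := G.edgeFinset.card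

/-- Sum over unordered edges of a symmetric vertex-pair function. -/
def edgeSum (G : SimpleGraph V) (f : V → V → ℤ) (hf : ∀ u v, f u v = f v u) : ℤ :=
  ∑ e ∈ G.edgeFinset, Sym2.lift ⟨f, hf⟩ e

/-- First Zagreb index. -/
def M1 (G : SimpleGraph V) : ℤ := ∑ v, d G v ^ 2

/-- Second Zagreb index. -/
def M2 (G : SimpleGraph V) : ℤ :=
  edgeSum G (fun u v => d G u * d G v) (by intros; ring)

/-- F-index. -/
def F (G : SimpleGraph V) : ℤ := ∑ v, d G v ^ 3

/-- ξ₄. -/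
def xi4 (G : SimpleGraph V) : ℤ := ∑ v, d G v ^ 4

/-- Redefined third Zagreb index. -/
def ReZG3 (G : SimpleGraph V) : ℤ :=
  edgeSum G (fun u v => d G u * d G v * (d G u + d G v)) (by intros; ring)

/-- F-coindex: sum over edges of the complement with degrees in G. -/
def Fbar (G : SimpleGraph V) : ℤ :=
  edgeSum Gᶜ (fun u v => d G u ^ 2 + d G v ^ 2) (by intros; ring)

/-- Subdivision graph. -/
def subdivision (G : SimpleGraph V) : SimpleGraph (V ⊕ G.edgeSet) where
  Adj x y :=
    match x, y with
    | Sum.inl u, Sum.inr e => u ∈ (e : Sym2 V)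
    | Sum.inr e, Sum.inl u => u ∈ (e : Sym2 V)
    | _, _ => False
  symm := by constructor; rintro (u | e) (v | f) h <;> first | exact h | exact h.elim
  loopless := by constructor; rintro (u | e) <;> simp

/-- Vertex-semitotal graph. -/
def vertexSemitotal (G : SimpleGraph V) : SimpleGraph (V ⊕ G.edgeSet) where
  Adj x y :=
    match x, y with
    | Sum.inl u, Sum.inl v => G.Adj u v
    | Sum.inl u, Sum.inr e => u ∈ (e : Sym2 V)
    | Sum.inr e, Sum.inl u => u ∈ (e : Sym2 V)
    | _, _ => False
  symm := by
    constructor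
    rintro (u | e) (v | f) h
    · exact G.symm.symm _ _ h
    · exact h
    · exact h
    · exact h.elim
  loopless := by
    constructor
    rintro (u | e) h
    · exact G.loopless.irrefl u h
    · exact h

/-- Edge-semitotal graph. -/
def edgeSemitotal (G : SimpleGraph V) : SimpleGraph (V ⊕ G.edgeSet) where
  Adj x y :=
    match x, y with
    | Sum.inl u, Sum.inr e => u ∈ (e : Sym2 V)
    | Sum.inr e, Sum.inl u => u ∈ (e : Sym2 V)
    | Sum.inr e, Sum.inr f => e ≠ f ∧ ∃ v, v ∈ (e : Sym2 V) ∧ v ∈ (f : Sym2 V)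
    | _, _ => False
  symm := by
    constructor
    rintro (u | e) (v | f) h
    · exact h.elim
    · exact h
    · exact h
    · obtain ⟨hne, w, h1, h2⟩ := h
      exact ⟨hne.symm, w, h2, h1⟩
  loopless := by
    constructor
    rintro (u | e) h
    · exact h
    · exact h.1 rfl

/-- Total graph. -/
def total (G : SimpleGraph V) : SimpleGraph (V ⊕ G.edgeSet) where
  Adj x y :=
    match x, y with
    | Sum.inl u, Sum.inl v => G.Adj u v
    | Sum.inl u, Sum.inr e => u ∈ (e : Sym2 V)
    | Sum.inr e, Sum.inl u => u ∈ (e : Sym2 V)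
    | Sum.inr e, Sum.inr f => e ≠ f ∧ ∃ v, v ∈ (e : Sym2 V) ∧ v ∈ (f : Sym2 V)
  symm := by
    constructor
    rintro (u | e) (v | f) h
    · exact G.symm.symm _ _ h
    · exact h
    · exact h
    · obtain ⟨hne, w, h1, h2⟩ := h
      exact ⟨hne.symm, w, h2, h1⟩
  loopless := by
    constructor
    rintro (u | e) h
    · exact G.loopless.irrefl u h
    · exact h.1 rfl

/-- Paraline graph: line graph of the subdivision graph. -/
def paraline (G : SimpleGraph V) : SimpleGraph (subdivision G).edgeSet :=
  (subdivision G).lineGraph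


/-!
In `T₂(G)` an original vertex `u` is adjacent exactly to the edges at `u`, so it keeps its degree,
while the vertex on the edge `ab` sees `a`, `b` and the `(d(a) - 1) + (d(b) - 1)` other edges at
`a` or `b`, so it has degree `d(a) + d(b)`. Summing
`(d(a) + d(b))³ = d(a)³ + d(b)³ + 3 d(a) d(b) (d(a) + d(b))` over the edges, the first part
counts each `d(v)³` once per edge at `v`, which gives `ξ₄(G)`.
-/

lemma degree_eq_card_inl_add_card_inr {α β : Type*} [Fintype α] [Fintype β]
    (H : SimpleGraph (α ⊕ β)) (x : α ⊕ β) :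
    H.degree x = #{a | H.Adj x (Sum.inl a)} + #{b | H.Adj x (Sum.inr b)} := by
  rw [← card_neighborFinset_eq_degree, neighborFinset_eq_filter, card_filter, card_filter,
    card_filter, Fintype.sum_sum_type]

section

variable {α : Type*} (G : SimpleGraph α)

@[simp] lemma edgeSemitotal_adj_inl_inl (u v : α) :
    ¬(edgeSemitotal G).Adj (Sum.inl u) (Sum.inl v) := id

@[simp] lemma edgeSemitotal_adj_inl_inr (u : α) (e : G.edgeSet) :
    (edgeSemitotal G).Adj (Sum.inl u) (Sum.inr e) ↔ u ∈ (e : Sym2 α) := Iff.rfl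

@[simp] lemma edgeSemitotal_adj_inr_inl (e : G.edgeSet) (u : α) :
    (edgeSemitotal G).Adj (Sum.inr e) (Sum.inl u) ↔ u ∈ (e : Sym2 α) := Iff.rfl

@[simp] lemma edgeSemitotal_adj_inr_inr (e f : G.edgeSet) :
    (edgeSemitotal G).Adj (Sum.inr e) (Sum.inr f) ↔ G.lineGraph.Adj e f :=
  lineGraph_adj_iff_exists.symm

variable [Fintype α]

lemma card_filter_mem_edgeSet (v : α) :
    #{e : G.edgeSet | v ∈ (e : Sym2 α)} = G.degree v := by
  rw [← card_incidenceSet_eq_degree, ← Fintype.card_subtype]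
  exact Fintype.card_congr (Equiv.subtypeSubtypeEquivSubtypeInter (· ∈ G.edgeSet) (v ∈ ·))

/-- Inclusion–exclusion: the edges at `a` and the edges at `b` meet exactly in `ab`, and together
they are `ab` and its neighbours in the line graph. -/
lemma lineGraph_degree_add_two {a b : α} (hab : G.Adj a b) :
    G.lineGraph.degree ⟨s(a, b), hab⟩ + 2 = G.degree a + G.degree b := by
  set e : G.edgeSet := ⟨s(a, b), hab⟩
  set A : Finset G.edgeSet := {f | a ∈ (f : Sym2 α)}
  set B : Finset G.edgeSet := {f | b ∈ (f : Sym2 α)}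
  have hinter : A ∩ B = {e} := by
    ext f
    simp only [A, B, mem_inter, mem_filter, mem_univ, true_and, mem_singleton]
    rw [Sym2.mem_and_mem_iff hab.ne, Subtype.ext_iff]
  have hunion : A ∪ B = insert e (G.lineGraph.neighborFinset e) := by
    ext f
    simp only [A, B, mem_union, mem_filter, mem_univ, true_and, mem_insert, mem_neighborFinset,
      lineGraph_adj_iff_exists]
    by_cases hfe : f = e
    · simp [hfe, e]
    · simp [hfe, Ne.symm hfe, e]
  have := card_union_add_card_inter A B
  rw [hinter, hunion, card_insert_of_notMem (by simp), card_singleton, card_filter_mem_edgeSet,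
    card_filter_mem_edgeSet, card_neighborFinset_eq_degree] at this
  omega

lemma sum_edgeFinset_lift_add {M : Type*} [AddCommMonoid M] (g : α → M) :
    ∑ e ∈ G.edgeFinset, Sym2.lift ⟨fun a b => g a + g b, fun _ _ => add_comm _ _⟩ e =
      ∑ v, G.degree v • g v := by
  have hends : ∀ e ∈ G.edgeFinset,
      Sym2.lift ⟨fun a b => g a + g b, fun _ _ => add_comm _ _⟩ e = ∑ v ∈ e.toFinset, g v := by
    intro e he
    induction e using Sym2.inductionOn with
    | hf a b => rw [Sym2.lift_mk, Sym2.toFinset_mk_eq, sum_pair (G.mem_edgeFinset.mp he).ne]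
  rw [sum_congr rfl hends, sum_comm' (s' := fun v => G.incidenceFinset v) (t' := univ)]
  · simp [card_incidenceFinset_eq_degree]
  · simp [incidenceFinset_eq_filter]

lemma degree_edgeSemitotal_inl (u : α) :
    (edgeSemitotal G).degree (Sum.inl u) = G.degree u := by
  simp only [degree_eq_card_inl_add_card_inr, edgeSemitotal_adj_inl_inl, filter_false,
    card_empty, zero_add, edgeSemitotal_adj_inl_inr, card_filter_mem_edgeSet]

lemma degree_edgeSemitotal_inr {a b : α} (hab : G.Adj a b) :
    (edgeSemitotal G).degree (Sum.inr ⟨s(a, b), hab⟩) = G.degree a + G.degree b := by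
  have hends : ({v | v ∈ s(a, b)} : Finset α) = {a, b} := by
    ext v
    simp
  simp only [degree_eq_card_inl_add_card_inr, edgeSemitotal_adj_inr_inl,
    edgeSemitotal_adj_inr_inr]
  rw [hends, card_pair hab.ne, ← neighborFinset_eq_filter, card_neighborFinset_eq_degree,
    add_comm, lineGraph_degree_add_two]

lemma d_edgeSemitotal_inl (u : α) : d (edgeSemitotal G) (Sum.inl u) = d G u := by
  rw [d, degree_edgeSemitotal_inl, d]

lemma d_edgeSemitotal_inr (e : G.edgeSet) :
    d (edgeSemitotal G) (Sum.inr e) =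
      Sym2.lift ⟨fun a b => d G a + d G b, fun _ _ => add_comm _ _⟩ e := by
  obtain ⟨e, he⟩ := e
  induction e using Sym2.inductionOn with
  | hf a b => simp [d, degree_edgeSemitotal_inr G he]

end

theorem stmt5 {V : Type*} [Fintype V] (G : SimpleGraph V) :
    F (edgeSemitotal G) = F G + xi4 G + 3 * ReZG3 G := by
  have hcube : ∀ e ∈ G.edgeFinset,
      Sym2.lift ⟨fun a b => d G a + d G b, fun _ _ => add_comm _ _⟩ e ^ 3 =
        Sym2.lift ⟨fun a b => d G a ^ 3 + d G b ^ 3, fun _ _ => add_comm _ _⟩ e +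
        3 * Sym2.lift ⟨fun a b => d G a * d G b * (d G a + d G b), by intros; ring⟩ e := by
    intro e _
    induction e using Sym2.inductionOn with
    | hf a b => simp only [Sym2.lift_mk]; ring
  calc F (edgeSemitotal G)
      = F G + ∑ e ∈ G.edgeFinset,
          Sym2.lift ⟨fun a b => d G a + d G b, fun _ _ => add_comm _ _⟩ e ^ 3 := by
        rw [F, F, Fintype.sum_sum_type, sum_subtype G.edgeFinset (fun _ => G.mem_edgeFinset)
          (F := inferInstance)]
        simp only [d_edgeSemitotal_inl, d_edgeSemitotal_inr]
    _ = F G + xi4 G + 3 * ReZG3 G := by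
        rw [sum_congr rfl hcube, sum_add_distrib, ← mul_sum, sum_edgeFinset_lift_add, ← add_assoc]
        congr 2
        exact sum_congr rfl fun v _ => by rw [nsmul_eq_mul]; exact (pow_succ' (d G v) 3).symm

end Paper
end
end

section
/- Let G be a finite simple graph with n vertices and m edges. The F-coindex of the vertex-semitotal graph satisfies F̄(T₁(G)) = 4(m+n-1)·M₁(G) - 8·F(G) + 4m(m+n-3). -/
/-!
A vertex `v` of a graph `H` on `N` vertices lies on `N - 1 - d(v)` edges of the complement and
contributes `d(v)²` to each of them, so `F̄(H) = (N - 1) M₁(H) - F(H)`. In `T₁(G)` the `n` original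
vertices have degree `2 d(u)` and the `m` edge-vertices degree `2`, so `N = n + m`,
`M₁(T₁(G)) = 4 M₁(G) + 4m` and `F(T₁(G)) = 8 F(G) + 8m`.
-/

open SimpleGraph Finset
open scoped Classical

noncomputable section
namespace Paper

variable {V : Type*} [Fintype V]

section WeightedHandshake

variable {M : Type*} [AddCommMonoid M] (K : SimpleGraph V) (g : V → M)

theorem sum_dart_fst : ∑ d : K.Dart, g d.fst = ∑ v, K.degree v • g v := by
  rw [← sum_fiberwise univ (fun d : K.Dart => d.fst)]
  refine sum_congr rfl fun v _ => ?_
  rw [sum_congr rfl fun d hd => congrArg g (mem_filter.1 hd).2, sum_const,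
    K.dart_fst_fiber_card_eq_degree]

theorem sum_dart_fst_eq_sum_edgeFinset :
    ∑ d : K.Dart, g d.fst =
      ∑ e ∈ K.edgeFinset, Sym2.lift ⟨fun u v => g u + g v, fun _ _ => add_comm _ _⟩ e := by
  rw [← sum_fiberwise_of_maps_to (g := fun d : K.Dart => d.edge) (t := K.edgeFinset)
    (fun d _ => K.mem_edgeFinset.2 d.edge_mem)]
  refine sum_congr rfl fun e he => ?_
  induction e with
  | _ a b =>
    let d : K.Dart := ⟨(a, b), K.mem_edgeFinset.1 he⟩
    rw [show s(a, b) = d.edge from rfl, d.edge_fiber, sum_pair d.symm_ne.symm]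
    rfl

end WeightedHandshake

theorem edgeSum_add_eq_sum_degree_mul (K : SimpleGraph V) (g : V → ℤ) :
    edgeSum K (fun u v => g u + g v) (fun _ _ => add_comm _ _) = ∑ v, K.degree v * g v := by
  simp only [edgeSum, ← sum_dart_fst_eq_sum_edgeFinset, sum_dart_fst, nsmul_eq_mul]

theorem Fbar_eq_card_sub_one_mul_M1_sub_F (K : SimpleGraph V) :
    Fbar K = (Fintype.card V - 1 : ℤ) * M1 K - F K := by
  have hdeg (v : V) [Fintype (Kᶜ.neighborSet v)] :
      (Kᶜ.degree v : ℤ) = Fintype.card V - 1 - d K v := by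
    have := K.degree_lt_card_verts v
    rw [degree_compl, d]
    omega
  rw [Fbar, edgeSum_add_eq_sum_degree_mul Kᶜ (fun v => d K v ^ 2), M1, F, mul_sum,
    ← sum_sub_distrib]
  refine sum_congr rfl fun v _ => ?_
  rw [hdeg]
  ring

section VertexSemitotal

variable (G : SimpleGraph V)

theorem d_vertexSemitotal_inl (u : V) : d (vertexSemitotal G) (Sum.inl u) = 2 * d G u := by
  have hedges : ∑ e : G.edgeSet, (if u ∈ (e : Sym2 V) then 1 else 0 : ℤ) = G.degree u := by
    rw [← sum_subtype G.edgeFinset (fun _ => G.mem_edgeFinset) (fun e => if u ∈ e then 1 else 0),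
      sum_boole, ← incidenceFinset_eq_filter, card_incidenceFinset_eq_degree]
  rw [d, d, degree_eq_sum_if_adj, Fintype.sum_sum_type, two_mul]
  congr 1
  -- `if_congr` bridges the classical `Decidable` instances of the two adjacency relations
  · rw [degree_eq_sum_if_adj]
    exact sum_congr rfl fun _ _ => if_congr Iff.rfl rfl rfl
  · rw [← hedges]
    exact sum_congr rfl fun _ _ => if_congr Iff.rfl rfl rfl

theorem d_vertexSemitotal_inr (e : G.edgeSet) : d (vertexSemitotal G) (Sum.inr e) = 2 := by
  have hends : ∑ v : V, (if v ∈ (e : Sym2 V) then 1 else 0 : ℤ) = 2 := by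
    rw [sum_boole, show ({v | v ∈ (e : Sym2 V)} : Finset V) = (e : Sym2 V).toFinset by ext; simp,
      Sym2.card_toFinset_of_not_isDiag _ (G.not_isDiag_of_mem_edgeSet e.2)]
    rfl
  rw [d, degree_eq_sum_if_adj, Fintype.sum_sum_type, ← hends]
  refine (add_eq_left.2 (sum_eq_zero fun _ _ => if_neg id)).trans ?_
  exact sum_congr rfl fun _ _ => if_congr Iff.rfl rfl rfl

theorem card_edgeSet_eq_m : (Fintype.card G.edgeSet : ℤ) = m G := by
  rw [m, edgeFinset, Set.toFinset_card]

theorem sum_d_pow_vertexSemitotal (k : ℕ) :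
    ∑ x, d (vertexSemitotal G) x ^ k = 2 ^ k * ∑ v, d G v ^ k + 2 ^ k * m G := by
  simp only [Fintype.sum_sum_type, d_vertexSemitotal_inl, d_vertexSemitotal_inr, mul_pow,
    ← mul_sum, sum_const, card_univ, nsmul_eq_mul, card_edgeSet_eq_m]
  ring

theorem M1_vertexSemitotal : M1 (vertexSemitotal G) = 4 * M1 G + 4 * m G := by
  rw [M1, M1, sum_d_pow_vertexSemitotal]
  norm_num

theorem F_vertexSemitotal : F (vertexSemitotal G) = 8 * F G + 8 * m G := by
  rw [F, F, sum_d_pow_vertexSemitotal]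
  norm_num

end VertexSemitotal

theorem stmt12 {V : Type*} [Fintype V] (G : SimpleGraph V) :
    Fbar (vertexSemitotal G) =
      4 * (m G + (Fintype.card V : ℤ) - 1) * M1 G - 8 * F G +
        4 * m G * (m G + (Fintype.card V : ℤ) - 3) := by
  rw [Fbar_eq_card_sub_one_mul_M1_sub_F, M1_vertexSemitotal, F_vertexSemitotal,
    Fintype.card_sum, Nat.cast_add, card_edgeSet_eq_m]
  ring

end Paper
end
end
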